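/- For any real matrices P ∈ ℝ^{N×ρ} and Q ∈ ℝ^{T×ρ}, the nuclear norm of their product satisfies ‖P Qᵀ‖_* ≤ (1/2)(‖P‖_F² + ‖Q‖_F²). -/

import Mathlib

/-!
Let `σᵢ = √μᵢ` be the singular values of `M = P Qᵀ`, where `MᵀM vᵢ = μᵢ vᵢ` for an orthonormal
eigenbasis `(vᵢ)`. The normalized vectors `uᵢ = σᵢ⁻¹ M vᵢ` are orthonormal where `σᵢ ≠ 0` and vanish
elsewhere, and `σᵢ = uᵢ ⬝ M vᵢ = (Pᵀuᵢ) ⬝ (Qᵀvᵢ) ≤ ½ (|Pᵀuᵢ|² + |Qᵀvᵢ|²)`. Summing over `i` and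
using Bessel's inequality for the columns of `P` against `(uᵢ)` and of `Q` against `(vᵢ)` bounds
the two sums by `‖P‖_F²` and `‖Q‖_F²`.
-/

open Matrix
open scoped InnerProductSpace

lemma transpose_mul_self_isHermitian {N T : ℕ} (X : Matrix (Fin N) (Fin T) ℝ) :
    (Xᵀ * X).IsHermitian := by
  have := Matrix.isHermitian_conjTranspose_mul_self X
  simpa [Matrix.conjTranspose_eq_transpose_of_trivial] using this

/-- Nuclear norm: sum of singular values (square roots of eigenvalues of `XᵀX`). -/
noncomputable def nuclearNorm {N T : ℕ} (X : Matrix (Fin N) (Fin T) ℝ) : ℝ :=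
  ∑ i, Real.sqrt ((transpose_mul_self_isHermitian X).eigenvalues i)

/-- Frobenius norm `‖X‖_F = √(trace (XᵀX))`. -/
noncomputable def frobeniusNorm {N T : ℕ} (X : Matrix (Fin N) (Fin T) ℝ) : ℝ :=
  Real.sqrt (Matrix.trace (Xᵀ * X))

section BesselFamily

variable {ι m n k : Type*} [Fintype ι] [Fintype m] [Fintype n] [Fintype k]

/-- A Bessel family with bound `1`. -/
def IsBesselFamily (u : ι → m → ℝ) : Prop :=
  ∀ x : m → ℝ, ∑ i, (u i ⬝ᵥ x) ^ 2 ≤ x ⬝ᵥ x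

lemma dotProduct_eq_inner_toLp (x y : m → ℝ) :
    x ⬝ᵥ y = ⟪WithLp.toLp 2 x, WithLp.toLp 2 y⟫_ℝ := by
  rw [EuclideanSpace.inner_toLp_toLp, star_trivial, dotProduct_comm]

lemma isBesselFamily_of_orthonormal {u : ι → m → ℝ}
    (hu : Orthonormal ℝ fun i => WithLp.toLp 2 (u i)) : IsBesselFamily u := by
  intro x
  calc ∑ i, (u i ⬝ᵥ x) ^ 2 = ∑ i, ‖⟪WithLp.toLp 2 (u i), WithLp.toLp 2 x⟫_ℝ‖ ^ 2 := by
        simp only [dotProduct_eq_inner_toLp, Real.norm_eq_abs, sq_abs]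
    _ ≤ ‖WithLp.toLp 2 x‖ ^ 2 := hu.sum_inner_products_le _
    _ = x ⬝ᵥ x := by rw [← real_inner_self_eq_norm_sq, dotProduct_eq_inner_toLp]

lemma isBesselFamily_of_restrict {u : ι → m → ℝ} (s : Finset ι)
    (hs : IsBesselFamily fun i : s => u i) (hzero : ∀ i ∉ s, u i = 0) : IsBesselFamily u := by
  intro x
  calc ∑ i, (u i ⬝ᵥ x) ^ 2 = ∑ i ∈ s, (u i ⬝ᵥ x) ^ 2 :=
        (Finset.sum_subset s.subset_univ fun i _ hi => by simp [hzero i hi]).symm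
    _ = ∑ i : s, (u i ⬝ᵥ x) ^ 2 := (Finset.sum_coe_sort s _).symm
    _ ≤ x ⬝ᵥ x := hs x

/-- Where `σᵢ = 0` the member `σᵢ⁻¹ • wᵢ` is `0`, since `0⁻¹ = 0`. -/
lemma isBesselFamily_inv_smul [DecidableEq ι] {w : ι → m → ℝ} {σ : ι → ℝ}
    (hw : ∀ i j, w i ⬝ᵥ w j = if i = j then σ i ^ 2 else 0) :
    IsBesselFamily fun i => (σ i)⁻¹ • w i := by
  refine isBesselFamily_of_restrict {i | σ i ≠ 0} (isBesselFamily_of_orthonormal ?_) ?_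
  · rw [orthonormal_iff_ite]
    rintro ⟨i, hi⟩ ⟨j, hj⟩
    rw [← dotProduct_eq_inner_toLp, smul_dotProduct, dotProduct_smul, hw]
    by_cases hij : i = j
    · subst hij
      simp only [if_true, smul_eq_mul]
      field_simp [(Finset.mem_filter.mp hi).2]
    · simp [hij]
  · intro i hi
    simp [by simpa using hi]

lemma trace_transpose_mul_self (A : Matrix m n ℝ) : trace (Aᵀ * A) = ∑ j, Aᵀ j ⬝ᵥ Aᵀ j := by
  simp [trace, mul_apply, dotProduct]

lemma IsBesselFamily.sum_transpose_mulVec_le_trace {u : ι → m → ℝ} (hu : IsBesselFamily u)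
    (A : Matrix m n ℝ) : ∑ i, (Aᵀ *ᵥ u i) ⬝ᵥ (Aᵀ *ᵥ u i) ≤ trace (Aᵀ * A) := by
  rw [trace_transpose_mul_self]
  calc ∑ i, (Aᵀ *ᵥ u i) ⬝ᵥ (Aᵀ *ᵥ u i) = ∑ j, ∑ i, (u i ⬝ᵥ Aᵀ j) ^ 2 := by
        rw [Finset.sum_comm]
        simp only [dotProduct_comm (u _), sq]
        rfl
    _ ≤ ∑ j, Aᵀ j ⬝ᵥ Aᵀ j := Finset.sum_le_sum fun j _ => hu _

lemma dotProduct_le_half_add (a b : n → ℝ) : a ⬝ᵥ b ≤ 1 / 2 * (a ⬝ᵥ a + b ⬝ᵥ b) := by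
  have h : 0 ≤ (a - b) ⬝ᵥ (a - b) := Finset.sum_nonneg fun i _ => mul_self_nonneg _
  simp only [sub_dotProduct, dotProduct_sub, dotProduct_comm b a] at h
  linarith

lemma sum_dotProduct_mul_transpose_mulVec_le {u : ι → m → ℝ} {v : ι → n → ℝ}
    (hu : IsBesselFamily u) (hv : IsBesselFamily v) (P : Matrix m k ℝ) (Q : Matrix n k ℝ) :
    ∑ i, u i ⬝ᵥ (P * Qᵀ) *ᵥ v i ≤ 1 / 2 * (trace (Pᵀ * P) + trace (Qᵀ * Q)) :=
  calc ∑ i, u i ⬝ᵥ (P * Qᵀ) *ᵥ v i = ∑ i, (Pᵀ *ᵥ u i) ⬝ᵥ (Qᵀ *ᵥ v i) := by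
        simp only [← mulVec_mulVec, dotProduct_mulVec, mulVec_transpose]
    _ ≤ ∑ i, 1 / 2 * ((Pᵀ *ᵥ u i) ⬝ᵥ (Pᵀ *ᵥ u i) + (Qᵀ *ᵥ v i) ⬝ᵥ (Qᵀ *ᵥ v i)) :=
        Finset.sum_le_sum fun i _ => dotProduct_le_half_add _ _
    _ = 1 / 2 * (∑ i, (Pᵀ *ᵥ u i) ⬝ᵥ (Pᵀ *ᵥ u i) + ∑ i, (Qᵀ *ᵥ v i) ⬝ᵥ (Qᵀ *ᵥ v i)) := by
        rw [← Finset.mul_sum, Finset.sum_add_distrib]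
    _ ≤ 1 / 2 * (trace (Pᵀ * P) + trace (Qᵀ * Q)) := by
        gcongr
        exacts [hu.sum_transpose_mulVec_le_trace P, hv.sum_transpose_mulVec_le_trace Q]

lemma mulVec_dotProduct_mulVec_of_mulVec_eq_smul (M : Matrix m n ℝ) (x : n → ℝ) {y : n → ℝ}
    {μ : ℝ} (hy : (Mᵀ * M) *ᵥ y = μ • y) : (M *ᵥ x) ⬝ᵥ (M *ᵥ y) = μ * (x ⬝ᵥ y) := by
  rw [← vecMul_transpose, ← dotProduct_mulVec, mulVec_mulVec, hy, dotProduct_smul, smul_eq_mul]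

end BesselFamily

lemma frobeniusNorm_sq {N T : ℕ} (A : Matrix (Fin N) (Fin T) ℝ) :
    frobeniusNorm A ^ 2 = trace (Aᵀ * A) :=
  Real.sq_sqrt <| by
    rw [trace_transpose_mul_self]
    exact Finset.sum_nonneg fun j _ => Finset.sum_nonneg fun i _ => mul_self_nonneg _

/-- `uᵢ` and `vᵢ` are left and right singular vectors of `M`. -/
lemma exists_isBesselFamily_nuclearNorm_eq {N T : ℕ} (M : Matrix (Fin N) (Fin T) ℝ) :
    ∃ (u : Fin T → Fin N → ℝ) (v : Fin T → Fin T → ℝ), IsBesselFamily u ∧ IsBesselFamily v ∧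
      nuclearNorm M = ∑ i, u i ⬝ᵥ M *ᵥ v i := by
  set hM := transpose_mul_self_isHermitian M
  set σ : Fin T → ℝ := fun i => √(hM.eigenvalues i)
  set v : Fin T → Fin T → ℝ := fun i => (hM.eigenvectorBasis i).ofLp
  have hv : Orthonormal ℝ fun i => WithLp.toLp 2 (v i) := hM.eigenvectorBasis.orthonormal
  have hμ : ∀ i, 0 ≤ hM.eigenvalues i := fun i => by
    have hpsd : (Mᵀ * M).PosSemidef := by
      simpa using posSemidef_conjTranspose_mul_self M
    exact hpsd.eigenvalues_nonneg i
  have hMv : ∀ i j, (M *ᵥ v i) ⬝ᵥ (M *ᵥ v j) = if i = j then σ i ^ 2 else 0 := by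
    intro i j
    rw [mulVec_dotProduct_mulVec_of_mulVec_eq_smul M _ (hM.mulVec_eigenvectorBasis j),
      dotProduct_eq_inner_toLp, orthonormal_iff_ite.mp hv]
    split_ifs with hij
    · rw [hij, Real.sq_sqrt (hμ j), mul_one]
    · rw [mul_zero]
  refine ⟨_, v, isBesselFamily_inv_smul hMv, isBesselFamily_of_orthonormal hv, ?_⟩
  refine Finset.sum_congr rfl fun i _ => ?_
  rw [smul_dotProduct, hMv, if_pos rfl, smul_eq_mul, sq, inv_mul_eq_div, mul_self_div_self]

/-- `‖P Qᵀ‖_* ≤ (1/2)(‖P‖_F² + ‖Q‖_F²)`. -/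
theorem nuclearNorm_mul_transpose_le {N T ρ : ℕ}
    (P : Matrix (Fin N) (Fin ρ) ℝ) (Q : Matrix (Fin T) (Fin ρ) ℝ) :
    nuclearNorm (P * Qᵀ) ≤ (1 / 2) * (frobeniusNorm P ^ 2 + frobeniusNorm Q ^ 2) := by
  obtain ⟨u, v, hu, hv, hnuc⟩ := exists_isBesselFamily_nuclearNorm_eq (P * Qᵀ)
  rw [hnuc, frobeniusNorm_sq, frobeniusNorm_sq]
  exact sum_dotProduct_mul_transpose_mulVec_le hu hv P Q
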